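/- arXiv:2209.07037 — 5 statements merged into one kernel-verified Lean document; each statement's English description precedes it below -/
import Mathlib

section
/- Let h, v1, v2, g, ξ, A_g be real numbers with h ≠ 0, and let J be the x-direction flux Jacobian of the shallow water–Exner system with Grass closure model (m = 3). Then the characteristic polynomial of J factors as det(λI − J) = (λ − v1) · (λ³ − 2 v1 λ² + (v1² − g h − g ξ A_g (3 v1² + v2²)) λ + g ξ A_g v1 (3 v1² + v2²)). -/
open Polynomial Matrix

/-!
Conjugating `J` by `diag(1, 1, 1, h)` multiplies its last row by `h` and divides its last column
by `h`, which clears every denominator without changing the characteristic polynomial; the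
factorization is then a cofactor expansion and a ring identity.
-/

theorem Matrix.charpoly_mul_mul_of_mul_eq_one {n R : Type*} [Fintype n] [DecidableEq n]
    [CommRing R] {A B : Matrix n n R} (hBA : B * A = 1) (N : Matrix n n R) :
    (A * N * B).charpoly = N.charpoly := by
  rw [charpoly_mul_comm, ← mul_assoc, hBA, one_mul]

def sweExnerRescaledJacobian (h v1 v2 g ξ Ag : ℝ) : Matrix (Fin 4) (Fin 4) ℝ :=
  !![0, 1, 0, 0;
     g * h - v1 ^ 2, 2 * v1, 0, g;
     -(v1 * v2), v2, v1, 0;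
     -(3 * ξ * Ag * v1 * (v1 ^ 2 + v2 ^ 2)), ξ * Ag * (3 * v1 ^ 2 + v2 ^ 2),
       2 * ξ * Ag * v1 * v2, 0]

theorem swe_exner_jacobian_eq_diagonal_conj {h : ℝ} (hh : h ≠ 0) (v1 v2 g ξ Ag : ℝ) :
    !![0, 1, 0, 0;
       g * h - v1 ^ 2, 2 * v1, 0, g * h;
       -(v1 * v2), v2, v1, 0;
       -(3 * ξ * Ag * v1 * (v1 ^ 2 + v2 ^ 2)) / h,
         ξ * Ag * (3 * v1 ^ 2 + v2 ^ 2) / h,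
         2 * ξ * Ag * v1 * v2 / h, 0] =
      diagonal ![1, 1, 1, h⁻¹] * sweExnerRescaledJacobian h v1 v2 g ξ Ag *
        diagonal ![1, 1, 1, h] := by
  ext i j
  fin_cases i <;> fin_cases j <;>
    simp [sweExnerRescaledJacobian, diagonal_mul, mul_diagonal] <;> field_simp

theorem charpoly_sweExnerRescaledJacobian (h v1 v2 g ξ Ag : ℝ) :
    (sweExnerRescaledJacobian h v1 v2 g ξ Ag).charpoly =
      (X - C v1) *
        (X ^ 3 - C (2 * v1) * X ^ 2
          + C (v1 ^ 2 - g * h - g * ξ * Ag * (3 * v1 ^ 2 + v2 ^ 2)) * X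
          + C (g * ξ * Ag * v1 * (3 * v1 ^ 2 + v2 ^ 2))) := by
  rw [charpoly, det_succ_row_zero]
  simp [sweExnerRescaledJacobian, det_fin_three, Fin.sum_univ_succ, Fin.succAbove,
    charmatrix_apply, diagonal_apply, map_ofNat C]
  ring

/-- The characteristic polynomial of the x-direction flux Jacobian of the
shallow water–Exner system with Grass closure model (m = 3) factors as
`(λ − v1) · (λ³ − 2 v1 λ² + (v1² − g h − g ξ A_g (3 v1² + v2²)) λ
  + g ξ A_g v1 (3 v1² + v2²))`. -/
theorem swe_exner_charpoly_factorization
    (h v1 v2 g ξ Ag : ℝ) (hh : h ≠ 0)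
    (J : Matrix (Fin 4) (Fin 4) ℝ)
    (hJ : J = !![0, 1, 0, 0;
                 g * h - v1 ^ 2, 2 * v1, 0, g * h;
                 -(v1 * v2), v2, v1, 0;
                 -(3 * ξ * Ag * v1 * (v1 ^ 2 + v2 ^ 2)) / h,
                   ξ * Ag * (3 * v1 ^ 2 + v2 ^ 2) / h,
                   2 * ξ * Ag * v1 * v2 / h, 0]) :
    J.charpoly =
      (X - C v1) *
        (X ^ 3 - C (2 * v1) * X ^ 2
          + C (v1 ^ 2 - g * h - g * ξ * Ag * (3 * v1 ^ 2 + v2 ^ 2)) * X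
          + C (g * ξ * Ag * v1 * (3 * v1 ^ 2 + v2 ^ 2))) := by
  have hdiag :
      diagonal ![1, 1, 1, h] * diagonal ![1, 1, 1, h⁻¹] = (1 : Matrix (Fin 4) (Fin 4) ℝ) := by
    rw [diagonal_mul_diagonal, ← diagonal_one]
    congr 1
    ext i
    fin_cases i <;> simp [hh]
  rw [hJ, swe_exner_jacobian_eq_diagonal_conj hh, charpoly_mul_mul_of_mul_eq_one hdiag,
    charpoly_sweExnerRescaledJacobian]
end

section
/- Let h, v1, v2, g, ξ, A_g be real numbers with h ≠ 0, and let J be the x-direction flux Jacobian of the shallow water–Exner system with Grass closure model (m = 3). Then v1 is an eigenvalue of J, i.e., v1 is a root of the characteristic polynomial of J. -/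
open Polynomial

/-!
Rows 0 and 2 of `v1 • 1 - J` are `(v1, -1, 0, 0)` and `v2 • (v1, -1, 0, 0)`, so `v1 • 1 - J`
is singular.
-/

namespace Matrix

variable {n R : Type*} [Fintype n] [DecidableEq n] [CommRing R]

theorem det_eq_zero_of_row_eq_smul (A : Matrix n n R) {i j : n} (hij : i ≠ j) (c : R)
    (h : A i = c • A j) : A.det = 0 := by
  rw [← det_updateRow_add_smul_self A hij (-c)]
  exact det_eq_zero_of_row_eq_zero i fun k => by simp [h]

theorem isRoot_charpoly_of_row_eq_smul (A : Matrix n n R) (μ : R) {i j : n} (hij : i ≠ j)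
    (c : R) (h : (scalar n μ - A) i = c • (scalar n μ - A) j) : A.charpoly.IsRoot μ := by
  rw [IsRoot, eval_charpoly]
  exact det_eq_zero_of_row_eq_smul _ hij c h

end Matrix

theorem swe_exner_v1_eigenvalue_general
    (h v1 v2 g ξ Ag : ℝ)
    (J : Matrix (Fin 4) (Fin 4) ℝ)
    (hJ : J = !![0, 1, 0, 0;
                 g * h - v1 ^ 2, 2 * v1, 0, g * h;
                 -(v1 * v2), v2, v1, 0;
                 -(3 * ξ * Ag * v1 * (v1 ^ 2 + v2 ^ 2)) / h,
                   ξ * Ag * (3 * v1 ^ 2 + v2 ^ 2) / h,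
                   2 * ξ * Ag * v1 * v2 / h, 0]) :
    J.charpoly.IsRoot v1 := by
  refine J.isRoot_charpoly_of_row_eq_smul v1 (i := 2) (j := 0) (by decide) v2 ?_
  ext k
  fin_cases k <;> simp [hJ, mul_comm]

/-- `v1` is an eigenvalue of the x-direction flux Jacobian of the shallow
water–Exner system with Grass closure model (m = 3), i.e., a root of its
characteristic polynomial. -/
theorem swe_exner_v1_eigenvalue
    (h v1 v2 g ξ Ag : ℝ) (hh : h ≠ 0)
    (J : Matrix (Fin 4) (Fin 4) ℝ)
    (hJ : J = !![0, 1, 0, 0;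
                 g * h - v1 ^ 2, 2 * v1, 0, g * h;
                 -(v1 * v2), v2, v1, 0;
                 -(3 * ξ * Ag * v1 * (v1 ^ 2 + v2 ^ 2)) / h,
                   ξ * Ag * (3 * v1 ^ 2 + v2 ^ 2) / h,
                   2 * ξ * Ag * v1 * v2 / h, 0]) :
    J.charpoly.IsRoot v1 :=
  swe_exner_v1_eigenvalue_general h v1 v2 g ξ Ag J hJ
end

section
/- Let h, v1, v2, g, ξ, A_g be real numbers with h ≠ 0, and let J be the x-direction flux Jacobian of the shallow water–Exner system with Grass closure model (m = 3). A real number λ is an eigenvalue of J if and only if λ = v1 or λ³ − 2 v1 λ² + (v1² − g h − g ξ A_g (3 v1² + v2²)) λ + g ξ A_g v1 (3 v1² + v2²) = 0. -/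
/-!
The eigenvalues of `J` are the roots of its characteristic polynomial `det (λ I - J)`.
Expanding this determinant gives `(λ - v1) P(λ)`. The entries `/ h` of the last row only enter
through the cofactor of the entry `g h`, the other nonzero off-diagonal entry of the last
column, so the factorisation needs `h ≠ 0`.
-/

theorem Matrix.hasEigenvalue_toLin'_iff_det_scalar_sub_eq_zero {R n : Type*} [CommRing R]
    [IsDomain R] [Fintype n] [DecidableEq n] (A : Matrix n n R) (μ : R) :
    Module.End.HasEigenvalue (Matrix.toLin' A) μ ↔ (Matrix.scalar n μ - A).det = 0 := by
  rw [Module.End.hasEigenvalue_iff_isRoot_charpoly, Matrix.charpoly_toLin', Polynomial.IsRoot,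
    Matrix.eval_charpoly]

noncomputable def sweExnerJacobian (h v1 v2 g ξ Ag : ℝ) : Matrix (Fin 4) (Fin 4) ℝ :=
  !![0, 1, 0, 0;
     g * h - v1 ^ 2, 2 * v1, 0, g * h;
     -(v1 * v2), v2, v1, 0;
     -(3 * ξ * Ag * v1 * (v1 ^ 2 + v2 ^ 2)) / h,
       ξ * Ag * (3 * v1 ^ 2 + v2 ^ 2) / h,
       2 * ξ * Ag * v1 * v2 / h, 0]

theorem det_scalar_sub_sweExnerJacobian {h : ℝ} (hh : h ≠ 0) (v1 v2 g ξ Ag lam : ℝ) :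
    (Matrix.scalar (Fin 4) lam - sweExnerJacobian h v1 v2 g ξ Ag).det =
      (lam - v1) * (lam ^ 3 - 2 * v1 * lam ^ 2
          + (v1 ^ 2 - g * h - g * ξ * Ag * (3 * v1 ^ 2 + v2 ^ 2)) * lam
          + g * ξ * Ag * v1 * (3 * v1 ^ 2 + v2 ^ 2)) := by
  have hscalar : Matrix.scalar (Fin 4) lam =
      !![lam, 0, 0, 0; 0, lam, 0, 0; 0, 0, lam, 0; 0, 0, 0, lam] := by
    ext i j
    fin_cases i <;> fin_cases j <;> simp
  rw [hscalar, sweExnerJacobian]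
  simp only [Matrix.of_sub_of, Matrix.cons_sub_cons, Matrix.empty_sub_empty]
  eval_det
  field_simp
  ring

/-- A real number `lam` is an eigenvalue of the x-direction flux Jacobian of
the shallow water–Exner system with Grass closure model (m = 3) if and only if
`lam = v1` or `lam` is a root of the associated cubic. -/
theorem swe_exner_eigenvalue_iff
    (h v1 v2 g ξ Ag : ℝ) (hh : h ≠ 0)
    (J : Matrix (Fin 4) (Fin 4) ℝ)
    (hJ : J = !![0, 1, 0, 0;
                 g * h - v1 ^ 2, 2 * v1, 0, g * h;
                 -(v1 * v2), v2, v1, 0;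
                 -(3 * ξ * Ag * v1 * (v1 ^ 2 + v2 ^ 2)) / h,
                   ξ * Ag * (3 * v1 ^ 2 + v2 ^ 2) / h,
                   2 * ξ * Ag * v1 * v2 / h, 0])
    (lam : ℝ) :
    Module.End.HasEigenvalue (Matrix.toLin' J) lam ↔
      lam = v1 ∨
        lam ^ 3 - 2 * v1 * lam ^ 2
          + (v1 ^ 2 - g * h - g * ξ * Ag * (3 * v1 ^ 2 + v2 ^ 2)) * lam
          + g * ξ * Ag * v1 * (3 * v1 ^ 2 + v2 ^ 2) = 0 := by
  obtain rfl : J = sweExnerJacobian h v1 v2 g ξ Ag := hJ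
  rw [Matrix.hasEigenvalue_toLin'_iff_det_scalar_sub_eq_zero,
    det_scalar_sub_sweExnerJacobian hh, mul_eq_zero, sub_eq_zero]
end

section
/- Let h, v1, v2, g, ξ, A_g be real numbers with h ≠ 0, and let J_y be the y-direction flux Jacobian of the shallow water–Exner system with Grass closure model (m = 3). Then the characteristic polynomial of J_y factors as det(λI − J_y) = (λ − v2) · (λ³ − 2 v2 λ² + (v2² − g h − g ξ A_g (v1² + 3 v2²)) λ + g ξ A_g v2 (v1² + 3 v2²)). -/
/-!
The last row of `J_y` is `ξ` times the gradient, with respect to `(h, h v1, h v2)`, of the sediment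
flux, a function of `v = (h v) / h` alone; by Euler's relation for this degree-zero homogeneous
function its first entry is `-(v1 q + v2 r)`, with `q`, `r` the other two. Expanding `det (λ - J_y)`
along the second column, the diagonal entry contributes
`(λ - v2) (λ³ - 2 v2 λ² + (v2² - g h - g h r) λ + g h (v1 q + v2 r))` and the last row contributes
`-q · g h v1 (λ - v2)`, so the `q`-terms cancel.
-/

open Polynomial

theorem charpoly_eq_mul_of_last_row_homogeneous {R : Type*} [CommRing R] (v1 v2 c G q r : R) :
    (!![0, 0, 1, 0;
        -(v1 * v2), v2, v1, 0;
        c - v2 ^ 2, 0, 2 * v2, G;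
        -(v1 * q + v2 * r), q, r, 0] : Matrix (Fin 4) (Fin 4) R).charpoly =
      (X - C v2) *
        (X ^ 3 - C (2 * v2) * X ^ 2 + C (v2 ^ 2 - c - G * r) * X + C (G * r * v2)) := by
  rw [Matrix.charpoly, Matrix.det_succ_row_zero]
  simp [Fin.sum_univ_succ, Matrix.det_fin_three, Matrix.charmatrix_apply, Fin.succAbove]
  ring

/-- The characteristic polynomial of the y-direction flux Jacobian of the
shallow water–Exner system with Grass closure model (m = 3) factors as
`(λ − v2) · (λ³ − 2 v2 λ² + (v2² − g h − g ξ A_g (v1² + 3 v2²)) λ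
  + g ξ A_g v2 (v1² + 3 v2²))`. -/
theorem swe_exner_charpoly_factorization_y
    (h v1 v2 g ξ Ag : ℝ) (hh : h ≠ 0)
    (Jy : Matrix (Fin 4) (Fin 4) ℝ)
    (hJy : Jy = !![0, 0, 1, 0;
                   -(v1 * v2), v2, v1, 0;
                   g * h - v2 ^ 2, 0, 2 * v2, g * h;
                   -(3 * ξ * Ag * v2 * (v1 ^ 2 + v2 ^ 2)) / h,
                     2 * ξ * Ag * v1 * v2 / h,
                     ξ * Ag * (v1 ^ 2 + 3 * v2 ^ 2) / h, 0]) :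
    Jy.charpoly =
      (X - C v2) *
        (X ^ 3 - C (2 * v2) * X ^ 2
          + C (v2 ^ 2 - g * h - g * ξ * Ag * (v1 ^ 2 + 3 * v2 ^ 2)) * X
          + C (g * ξ * Ag * v2 * (v1 ^ 2 + 3 * v2 ^ 2))) := by
  have euler : -(3 * ξ * Ag * v2 * (v1 ^ 2 + v2 ^ 2)) / h =
      -(v1 * (2 * ξ * Ag * v1 * v2 / h) + v2 * (ξ * Ag * (v1 ^ 2 + 3 * v2 ^ 2) / h)) := by ring
  have hgr : g * h * (ξ * Ag * (v1 ^ 2 + 3 * v2 ^ 2) / h) = g * ξ * Ag * (v1 ^ 2 + 3 * v2 ^ 2) := by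
    field_simp
  rw [hJy, euler, charpoly_eq_mul_of_last_row_homogeneous, hgr]
  simp only [map_mul]
  ring
end

section
/- Let g > 0, h > 0, σ ∈ (0,1), ξ = 1/(1 − σ), A_g ∈ [0,1], and v1, v2 ∈ ℝ, and let J be the x-direction flux Jacobian of the shallow water–Exner system with Grass closure model (m = 3). Then all eigenvalues of J are real; equivalently, the characteristic polynomial of J splits into linear factors over ℝ, so the system is hyperbolic. -/
/-!
Expanding the determinant, the characteristic polynomial of `J` is `(λ - v1) p(λ)`
with `p(λ) = λ ((λ - v1)² - g h) - K (λ - v1)` and `K = g h ξ A_g (3 v1² + v2²) / h ≥ 0`.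
At `λ = v1 ∓ √(g h)` the cubic `p` takes the values `± K √(g h)`; together
with its behaviour at `±∞` this gives three real roots by the intermediate value theorem
when `K > 0`, while for `K = 0` the roots are `0, v1 ± √(g h)`.
-/

open Polynomial Filter

namespace Polynomial

theorem splits_of_natDegree_le_card {K : Type*} [Field K] {p : K[X]} (hp : p ≠ 0) (s : Finset K)
    (hs : ∀ x ∈ s, p.IsRoot x) (hcard : p.natDegree ≤ s.card) : Splits p := by
  classical
  refine splits_iff_card_roots.mpr (le_antisymm (card_roots' p) ?_)
  calc p.natDegree ≤ s.card := hcard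
    _ ≤ p.roots.toFinset.card :=
      Finset.card_le_card fun x hx => Multiset.mem_toFinset.mpr ((mem_roots hp).mpr (hs x hx))
    _ ≤ Multiset.card p.roots := Multiset.toFinset_card_le _

theorem tendsto_atBot_of_leadingCoeff_nonneg_of_odd {p : ℝ[X]} (hlc : 0 ≤ p.leadingCoeff)
    (hodd : Odd p.natDegree) : Tendsto (fun x => p.eval x) atBot atBot := by
  have hq : (p.comp (-X)).natDegree = p.natDegree := by simp [natDegree_comp]
  have hqdeg : 0 < (p.comp (-X)).degree := by
    rw [← natDegree_pos_iff_degree_pos, hq]; exact hodd.pos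
  have hqlc : (p.comp (-X)).leadingCoeff ≤ 0 := by
    rw [leadingCoeff_comp (by simp)]
    simpa [hodd.neg_one_pow] using hlc
  have := ((p.comp (-X)).tendsto_atBot_of_leadingCoeff_nonpos hqdeg hqlc).comp
    tendsto_neg_atBot_atTop
  simpa [Function.comp_def, eval_comp] using this

theorem splits_of_natDegree_eq_three {p : ℝ[X]} (hd : p.natDegree = 3) (hlc : 0 ≤ p.leadingCoeff)
    {x₁ x₂ : ℝ} (hx : x₁ < x₂) (h₁ : 0 < p.eval x₁) (h₂ : p.eval x₂ < 0) : Splits p := by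
  have hc : ∀ a b, ContinuousOn (fun x => p.eval x) (Set.Icc a b) :=
    fun _ _ => p.continuous.continuousOn
  obtain ⟨x₀, hx₀, hx₀x₁⟩ := (((tendsto_atBot_of_leadingCoeff_nonneg_of_odd hlc
    (by rw [hd]; decide)).eventually (eventually_lt_atBot 0)).and (eventually_lt_atBot x₁)).exists
  obtain ⟨x₃, hx₃, hx₂x₃⟩ := (((p.tendsto_atTop_of_leadingCoeff_nonneg
    (by rw [← natDegree_pos_iff_degree_pos, hd]; norm_num) hlc).eventually
    (eventually_gt_atTop 0)).and (eventually_gt_atTop x₂)).exists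
  obtain ⟨r₁, hr₁, hpr₁⟩ := intermediate_value_Ioo hx₀x₁.le (hc _ _) ⟨hx₀, h₁⟩
  obtain ⟨r₂, hr₂, hpr₂⟩ := intermediate_value_Ioo' hx.le (hc _ _) ⟨h₂, h₁⟩
  obtain ⟨r₃, hr₃, hpr₃⟩ := intermediate_value_Ioo hx₂x₃.le (hc _ _) ⟨h₂, hx₃⟩
  refine splits_of_natDegree_le_card (ne_zero_of_natDegree_gt (n := 0) (by omega))
    {r₁, r₂, r₃} (by simp_all) ?_
  rw [Finset.card_eq_three.mpr ⟨r₁, r₂, r₃, ?_, ?_, ?_, rfl⟩, hd] <;>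
    linarith [hr₁.2, hr₂.1, hr₂.2, hr₃.1]

end Polynomial

noncomputable def exnerCubic (u a K : ℝ) : ℝ[X] := X * ((X - C u) ^ 2 - C a) - C K * (X - C u)

theorem eval_exnerCubic (u a K x : ℝ) :
    (exnerCubic u a K).eval x = x * ((x - u) ^ 2 - a) - K * (x - u) := by
  simp [exnerCubic]

theorem exnerCubic_monic (u a K : ℝ) : (exnerCubic u a K).Monic := by
  unfold exnerCubic; monicity!

theorem natDegree_exnerCubic (u a K : ℝ) : (exnerCubic u a K).natDegree = 3 := by
  unfold exnerCubic; compute_degree!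

theorem exnerCubic_splits {u a K : ℝ} (ha : 0 < a) (hK : 0 ≤ K) : Splits (exnerCubic u a K) := by
  have hsa : 0 < √a := Real.sqrt_pos.mpr ha
  have hsq : √a ^ 2 = a := Real.sq_sqrt ha.le
  rcases hK.eq_or_lt with rfl | hK
  · have hCa : C a = C √a ^ 2 := by rw [← C_pow, hsq]
    have : exnerCubic u a 0 = X * ((X - C (u + √a)) * (X - C (u - √a))) := by
      simp only [exnerCubic, hCa, map_zero, zero_mul, sub_zero, C_add, C_sub]
      ring
    rw [this]
    exact Splits.X.mul ((Splits.X_sub_C _).mul (Splits.X_sub_C _))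
  · have hleft : (exnerCubic u a K).eval (u - √a) = K * √a := by
      rw [eval_exnerCubic]; linear_combination (u - √a) * hsq
    have hright : (exnerCubic u a K).eval (u + √a) = -(K * √a) := by
      rw [eval_exnerCubic]; linear_combination (u + √a) * hsq
    refine splits_of_natDegree_eq_three (natDegree_exnerCubic u a K)
      ((exnerCubic_monic u a K).leadingCoeff ▸ zero_le_one) (x₁ := u - √a) (x₂ := u + √a)
      (by linarith) ?_ ?_
    · rw [hleft]; positivity
    · rw [hright]; exact neg_neg_of_pos (by positivity)

/-- The flux Jacobian with `a = g h` and `c = ξ A_g / h`. -/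
def fluxJacobian (a c u w : ℝ) : Matrix (Fin 4) (Fin 4) ℝ :=
  !![0, 1, 0, 0;
     a - u ^ 2, 2 * u, 0, a;
     -(u * w), w, u, 0;
     -(3 * c * u * (u ^ 2 + w ^ 2)), c * (3 * u ^ 2 + w ^ 2), 2 * c * u * w, 0]

theorem charpoly_fluxJacobian (a c u w : ℝ) :
    (fluxJacobian a c u w).charpoly =
      (X - C u) * exnerCubic u a (a * c * (3 * u ^ 2 + w ^ 2)) := by
  rw [fluxJacobian, Matrix.charpoly, Matrix.det_succ_row_zero]
  simp [Fin.sum_univ_succ, Matrix.det_fin_three, Matrix.charmatrix_apply, Fin.succAbove,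
    exnerCubic, map_ofNat]
  ring

/-- Hyperbolicity: under the physical assumptions `g > 0`, `h > 0`,
`σ ∈ (0,1)`, `ξ = 1/(1 − σ)`, `A_g ∈ [0,1]`, the characteristic polynomial of
the x-direction flux Jacobian of the shallow water–Exner system with Grass
closure model (m = 3) splits into linear factors over ℝ, i.e., all its
eigenvalues are real. -/
theorem swe_exner_hyperbolic
    (g h σ ξ Ag v1 v2 : ℝ)
    (hg : 0 < g) (hh : 0 < h) (hσ : σ ∈ Set.Ioo (0 : ℝ) 1)
    (hξ : ξ = 1 / (1 - σ)) (hAg : Ag ∈ Set.Icc (0 : ℝ) 1)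
    (J : Matrix (Fin 4) (Fin 4) ℝ)
    (hJ : J = !![0, 1, 0, 0;
                 g * h - v1 ^ 2, 2 * v1, 0, g * h;
                 -(v1 * v2), v2, v1, 0;
                 -(3 * ξ * Ag * v1 * (v1 ^ 2 + v2 ^ 2)) / h,
                   ξ * Ag * (3 * v1 ^ 2 + v2 ^ 2) / h,
                   2 * ξ * Ag * v1 * v2 / h, 0]) :
    Polynomial.Splits (J.charpoly.map (RingHom.id ℝ)) := by
  have hJ' : J = fluxJacobian (g * h) (ξ * Ag / h) v1 v2 := by
    rw [hJ, fluxJacobian]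
    ext i j
    fin_cases i <;> fin_cases j <;> simp <;> ring
  have hξpos : 0 < ξ := by rw [hξ]; exact one_div_pos.mpr (sub_pos.mpr hσ.2)
  have hc : 0 ≤ ξ * Ag / h := by have := hAg.1; positivity
  rw [Polynomial.map_id, hJ', charpoly_fluxJacobian]
  exact (Splits.X_sub_C _).mul (exnerCubic_splits (by positivity) (by positivity))
end
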